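/- For every memory interval A and every branch B of T, the intersection A ∩ B is a (possibly empty) set of consecutive vertices along B, i.e., it induces a subpath of B. -/

import Mathlib

namespace VEB

inductive OTree : Type where
  | node : List OTree → OTree

def OTree.children : OTree → List OTree
  | .node cs => cs

mutual
  def height : OTree → ℕ
    | .node cs => 1 + heightList cs
  def heightList : List OTree → ℕ
    | [] => 0
    | c :: cs => max (height c) (heightList cs)
end

def subtreeAt? : OTree → List ℕ → Option OTree
  | t, [] => some t
  | t, i :: p =>
    match t.children[i]? with
    | some c => subtreeAt? c p
    | none => none

/-- `p` is (the path of) a vertex of `t`. -/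
def IsVertex (t : OTree) (p : List ℕ) : Prop := (subtreeAt? t p).isSome

/-- `p` is a leaf of `t`. -/
def IsLeaf (t : OTree) (p : List ℕ) : Prop := subtreeAt? t p = some (.node [])

/-- All leaves of `t` are at the same depth (the bottom level). -/
def Uniform (t : OTree) : Prop := ∀ p, IsLeaf t p → p.length + 1 = height t

/-- The top `m+1` levels of `t` (the truncation of height `m+1`). -/
def trunc : ℕ → OTree → OTree
  | 0, _ => .node []
  | m+1, t => .node (t.children.map (trunc m))

/-- Paths of the vertices at depth `m`, in left-to-right order. -/
def levelPaths : ℕ → OTree → List (List ℕ)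
  | 0, _ => [[]]
  | m+1, t => (t.children.zipIdx.map fun ic => (levelPaths m ic.1).map (ic.2 :: ·)).flatten

/-- The level at which a tree of height `h` is cut: `max ⌊ε h⌋ 1`. -/
noncomputable def cutLevel (ε : ℝ) (h : ℕ) : ℕ := max ⌊ε * (h : ℝ)⌋₊ 1

/-- The van Emde Boas order of the vertex paths of `t` (with recursion fuel). -/
noncomputable def vEBAux (ε : ℝ) : ℕ → OTree → List (List ℕ)
  | 0, _ => []
  | fuel+1, t =>
    if height t ≤ 1 then [[]]
    else
      let m := cutLevel ε (height t)
      vEBAux ε fuel (trunc (m - 1) t) ++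
        ((levelPaths m t).map fun q =>
          match subtreeAt? t q with
          | some s => (vEBAux ε fuel s).map (q ++ ·)
          | none => []).flatten

/-- The van Emde Boas order `vEB_ε(t)` of the vertex paths of `t`. -/
noncomputable def vEB (ε : ℝ) (t : OTree) : List (List ℕ) := vEBAux ε (height t) t

/-- Position (index) of vertex `p` in the van Emde Boas order. -/
noncomputable def pos (ε : ℝ) (t : OTree) (p : List ℕ) : ℕ := (vEB ε t).idxOf p

/-- `A` is a set of vertices occupying consecutive positions in `vEB_ε(t)`. -/
def MemInterval (ε : ℝ) (t : OTree) (A : Set (List ℕ)) : Prop :=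
  ∃ i n, A = {p | p ∈ ((vEB ε t).drop i).take n}

/-- The vertices of the decomposition `D` of `t`: pairs `(p, k)` of the root path
and the height of a decomposition subtree (with recursion fuel). -/
noncomputable def decompAux (ε : ℝ) : ℕ → OTree → List (List ℕ × ℕ)
  | 0, _ => []
  | fuel+1, t =>
    if height t ≤ 1 then [([], 1)]
    else
      let m := cutLevel ε (height t)
      ([], height t) ::
        (decompAux ε fuel (trunc (m - 1) t) ++
          ((levelPaths m t).map fun q =>
            match subtreeAt? t q with
            | some s => (decompAux ε fuel s).map fun r => (q ++ r.1, r.2)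
            | none => []).flatten)

/-- The vertices of the decomposition `D` of `t`. -/
noncomputable def decompVerts (ε : ℝ) (t : OTree) : List (List ℕ × ℕ) :=
  decompAux ε (height t) t

/-- The children in the decomposition tree `D` of the decomposition vertex `(p, k)`:
the top tree followed by the bottom trees in left-to-right order. -/
noncomputable def dChildren (ε : ℝ) (t : OTree) (p : List ℕ) (k : ℕ) : List (List ℕ × ℕ) :=
  if k ≤ 1 then []
  else
    match subtreeAt? t p with
    | some s =>
      (p, cutLevel ε k) ::
        (levelPaths (cutLevel ε k) s).map fun q => (p ++ q, k - cutLevel ε k)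
    | none => []

/-- The decomposition subtree `(p, k)` contains the vertex `w` of `t`;
equivalently, the leaf `{w}` of `D` lies in the subtree of `D` rooted at `(p, k)`. -/
def DContains (p : List ℕ) (k : ℕ) (w : List ℕ) : Prop :=
  p <+: w ∧ w.length < p.length + k

/-- Vertex `v` is to the left of the branch with leaf `ℓ`. -/
def LeftOfBranch (v ℓ : List ℕ) : Prop := List.Lex (· < ·) v (ℓ.take v.length)

/-- Vertex `v` is to the right of the branch with leaf `ℓ`. -/
def RightOfBranch (v ℓ : List ℕ) : Prop := List.Lex (· < ·) (ℓ.take v.length) v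

/-- Every internal vertex of `t` has at least `a` children. -/
def MinArity (t : OTree) (a : ℕ) : Prop :=
  ∀ p s, subtreeAt? t p = some s → s.children ≠ [] → a ≤ s.children.length

/-- Every internal vertex of `t` has at most `b` children. -/
def MaxArity (t : OTree) (b : ℕ) : Prop :=
  ∀ p s, subtreeAt? t p = some s → s.children.length ≤ b

/-- `w` lies on the leftmost branch descending from `v` (always taking the leftmost child). -/
def OnLeftmostBranch (v w : List ℕ) : Prop :=
  v <+: w ∧ ∀ n (hn : n < w.length), v.length ≤ n → w.get ⟨n, hn⟩ = 0

/-- `w` lies on the rightmost branch descending from `v` (always taking the rightmost child). -/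
def OnRightmostBranch (t : OTree) (v w : List ℕ) : Prop :=
  v <+: w ∧ ∀ n (hn : n < w.length), v.length ≤ n →
    ∀ s, subtreeAt? t (w.take n) = some s → w.get ⟨n, hn⟩ + 1 = s.children.length

/-! In the recursion the top tree, which holds every ancestor above the cut, is listed before
the bottom trees, and each bottom tree is listed contiguously with its root path as a common
prefix. By induction every vertex therefore occurs exactly once in `vEB_ε(T)` (the cut level is
below the height because `ε < 1`), never after one of its descendants. The positions of the
vertices of a branch thus increase with depth, so an interval of positions meets the branch in
consecutive depths. -/

end VEB

namespace List

variable {α : Type*} [BEq α] [LawfulBEq α] {L : List α}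

theorem idxOf_le_idxOf_of_pairwise {R : α → α → Prop} (hL : L.Pairwise fun x y => ¬ R y x)
    {a b : α} (hab : R a b) (ha : a ∈ L) : L.idxOf a ≤ L.idxOf b := by
  by_contra! hlt
  have ha' : L.idxOf a < L.length := idxOf_lt_length_iff.2 ha
  have hb' : L.idxOf b < L.length := hlt.trans ha'
  have := pairwise_iff_getElem.1 hL _ _ hb' ha' hlt
  rw [getElem_idxOf, getElem_idxOf] at this
  exact this hab

theorem Nodup.mem_take_drop_iff (hL : L.Nodup) {i n : ℕ} {a : α} :
    a ∈ (L.drop i).take n ↔ a ∈ L ∧ i ≤ L.idxOf a ∧ L.idxOf a < i + n := by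
  simp only [mem_iff_getElem, length_take, length_drop, getElem_take, getElem_drop]
  constructor
  · rintro ⟨j, hj, rfl⟩
    refine ⟨⟨i + j, by omega, rfl⟩, ?_⟩
    rw [hL.idxOf_getElem]
    omega
  · rintro ⟨⟨k, hk, rfl⟩, hik, hkn⟩
    rw [hL.idxOf_getElem] at hik hkn
    exact ⟨k - i, by omega, by congr 1; omega⟩

end List

namespace VEB

lemma one_le_height (t : OTree) : 1 ≤ height t := by
  cases t
  rw [height]
  omega

lemma heightList_le_iff {cs : List OTree} {n : ℕ} :
    heightList cs ≤ n ↔ ∀ c ∈ cs, height c ≤ n := by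
  induction cs with
  | nil => simp [heightList]
  | cons c cs ih => simp [heightList, ih]

lemma height_le_heightList {c : OTree} {cs : List OTree} (h : c ∈ cs) :
    height c ≤ heightList cs :=
  heightList_le_iff.1 le_rfl c h

lemma subtreeAt?_append (t : OTree) (q r : List ℕ) :
    subtreeAt? t (q ++ r) = (subtreeAt? t q).bind (subtreeAt? · r) := by
  induction q generalizing t with
  | nil => rfl
  | cons i q ih =>
    simp only [List.cons_append, subtreeAt?]
    cases t.children[i]? <;> simp [ih]

lemma isVertex_append_iff {t s : OTree} {q r : List ℕ} (hs : subtreeAt? t q = some s) :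
    IsVertex t (q ++ r) ↔ IsVertex s r := by
  simp [IsVertex, subtreeAt?_append, hs]

lemma IsVertex.of_prefix {t : OTree} {p p' : List ℕ} (h : IsVertex t p') (hp : p <+: p') :
    IsVertex t p := by
  obtain ⟨r, rfl⟩ := hp
  rw [IsVertex, subtreeAt?_append] at h
  exact Option.isSome_of_isSome_bind h

lemma height_add_length_le_of_subtreeAt? {q : List ℕ} {t s : OTree}
    (h : subtreeAt? t q = some s) : height s + q.length ≤ height t := by
  induction q generalizing t with
  | nil => cases h; simp
  | cons i q ih =>
    obtain ⟨cs⟩ := t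
    rw [subtreeAt?] at h
    cases hc : cs[i]? with
    | none => simp [OTree.children, hc] at h
    | some c =>
      simp only [OTree.children, hc] at h
      have := height_le_heightList (List.mem_of_getElem? hc)
      have := ih h
      simp only [height, List.length_cons]
      omega

lemma IsVertex.length_lt_height {t : OTree} {p : List ℕ} (h : IsVertex t p) :
    p.length < height t := by
  obtain ⟨s, hs⟩ := Option.isSome_iff_exists.1 h
  have := height_add_length_le_of_subtreeAt? hs
  have := one_le_height s
  omega

lemma height_trunc_le (k : ℕ) (t : OTree) : height (trunc k t) ≤ k + 1 := by
  induction k generalizing t with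
  | zero => simp [trunc, height, heightList]
  | succ k ih =>
    have : heightList (t.children.map (trunc k)) ≤ k + 1 := by
      simpa [heightList_le_iff] using fun c _ => ih c
    rw [trunc, height]
    omega

lemma subtreeAt?_trunc {p : List ℕ} {k : ℕ} (t : OTree) (hp : p.length ≤ k) :
    subtreeAt? (trunc k t) p = (subtreeAt? t p).map (trunc (k - p.length)) := by
  induction p generalizing k t with
  | nil => rfl
  | cons i p ih =>
    obtain _ | k := k
    · simp at hp
    obtain ⟨cs⟩ := t
    simp only [trunc, subtreeAt?, OTree.children, List.getElem?_map]
    cases cs[i]? with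
    | none => rfl
    | some c => simpa using ih c (k := k) (by simpa using hp)

lemma isVertex_trunc_iff {k : ℕ} {t : OTree} {p : List ℕ} :
    IsVertex (trunc k t) p ↔ IsVertex t p ∧ p.length ≤ k := by
  constructor
  · intro h
    have hp : p.length ≤ k := by
      have := h.length_lt_height
      have := height_trunc_le k t
      omega
    rw [IsVertex, subtreeAt?_trunc t hp, Option.isSome_map] at h
    exact ⟨h, hp⟩
  · rintro ⟨h, hp⟩
    rwa [IsVertex, subtreeAt?_trunc t hp, Option.isSome_map]

lemma mem_levelPaths {m : ℕ} {t : OTree} {q : List ℕ} :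
    q ∈ levelPaths m t ↔ IsVertex t q ∧ q.length = m := by
  induction m generalizing t q with
  | zero => cases q <;> simp [levelPaths, IsVertex, subtreeAt?]
  | succ m ih =>
    cases q with
    | nil => simp [levelPaths]
    | cons i q =>
      simp only [levelPaths, List.mem_flatten, List.mem_map, Prod.exists, IsVertex, subtreeAt?,
        List.mem_zipIdx_iff_getElem?]
      cases h : t.children[i]? <;> simp [ih, IsVertex, h]

lemma nodup_levelPaths (m : ℕ) (t : OTree) : (levelPaths m t).Nodup := by
  induction m generalizing t with
  | zero => simp [levelPaths]
  | succ m ih =>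
    rw [levelPaths, List.nodup_flatten, List.pairwise_map]
    refine ⟨?_, ?_⟩
    · simp only [List.mem_map]
      rintro _ ⟨⟨c, i⟩, -, rfl⟩
      exact (ih c).map List.cons_injective
    · have : (t.children.zipIdx.map Prod.snd).Nodup := by
        rw [List.zipIdx_map_snd]
        exact List.nodup_range'
      refine (List.pairwise_map.1 this).imp ?_
      intro a b hab x hx hx'
      obtain ⟨q, -, rfl⟩ := List.mem_map.1 hx
      obtain ⟨q', -, h⟩ := List.mem_map.1 hx'
      exact hab (List.cons_eq_cons.1 h).1.symm

lemma cutLevel_lt {ε : ℝ} (hε : ε < 1) {h : ℕ} (hh : 2 ≤ h) : cutLevel ε h < h := by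
  refine max_lt ?_ (by omega)
  rw [Nat.floor_lt' (by omega)]
  exact mul_lt_of_lt_one_left (by positivity) hε

noncomputable def vEBBlock (ε : ℝ) (fuel : ℕ) (t : OTree) (q : List ℕ) : List (List ℕ) :=
  match subtreeAt? t q with
  | some s => (vEBAux ε fuel s).map (q ++ ·)
  | none => []

lemma vEBAux_succ (ε : ℝ) (fuel : ℕ) (t : OTree) :
    vEBAux ε (fuel + 1) t =
      if height t ≤ 1 then [[]]
      else vEBAux ε fuel (trunc (cutLevel ε (height t) - 1) t) ++
        ((levelPaths (cutLevel ε (height t)) t).map (vEBBlock ε fuel t)).flatten :=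
  rfl

lemma vEBBlock_of_subtreeAt? {ε : ℝ} {fuel : ℕ} {t s : OTree} {q : List ℕ}
    (hs : subtreeAt? t q = some s) : vEBBlock ε fuel t q = (vEBAux ε fuel s).map (q ++ ·) := by
  simp [vEBBlock, hs]

lemma mem_vEBBlock_iff {ε : ℝ} {fuel : ℕ} {t : OTree} {q p : List ℕ} :
    p ∈ vEBBlock ε fuel t q ↔
      ∃ s, subtreeAt? t q = some s ∧ ∃ r ∈ vEBAux ε fuel s, q ++ r = p := by
  cases hs : subtreeAt? t q <;> simp [vEBBlock, hs]

lemma isVertex_of_mem_vEBAux {ε : ℝ} {fuel : ℕ} {t : OTree} {p : List ℕ}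
    (h : p ∈ vEBAux ε fuel t) : IsVertex t p := by
  induction fuel generalizing t p with
  | zero => simp [vEBAux] at h
  | succ fuel ih =>
    rw [vEBAux_succ] at h
    split_ifs at h
    · rw [List.mem_singleton.1 h]
      rfl
    rcases List.mem_append.1 h with h | h
    · exact (isVertex_trunc_iff.1 (ih h)).1
    · simp only [List.mem_flatten, List.mem_map] at h
      obtain ⟨_, ⟨q, -, rfl⟩, hq⟩ := h
      obtain ⟨s, hs, r, hr, rfl⟩ := mem_vEBBlock_iff.1 hq
      exact (isVertex_append_iff hs).2 (ih hr)

lemma mem_vEBAux_of_isVertex {ε : ℝ} (hε : ε < 1) {fuel : ℕ} {t : OTree}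
    (ht : height t ≤ fuel) {p : List ℕ} (h : IsVertex t p) : p ∈ vEBAux ε fuel t := by
  induction fuel generalizing t p with
  | zero => have := one_le_height t; omega
  | succ fuel ih =>
    rw [vEBAux_succ]
    split_ifs with h1
    · have := h.length_lt_height
      simp [List.length_eq_zero_iff.1 (by omega : p.length = 0)]
    set m := cutLevel ε (height t)
    have hm : m < height t := cutLevel_lt hε (by omega)
    have hm1 : 1 ≤ m := le_max_right _ _
    rw [List.mem_append]
    by_cases hp : p.length ≤ m - 1
    · exact .inl (ih ((height_trunc_le _ _).trans (by omega)) (isVertex_trunc_iff.2 ⟨h, hp⟩))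
    have hq : IsVertex t (p.take m) := h.of_prefix (List.take_prefix m p)
    obtain ⟨s, hs⟩ := Option.isSome_iff_exists.1 hq
    have hqm : (p.take m).length = m := List.length_take_of_le (by omega)
    refine .inr <| List.mem_flatten.2
      ⟨_, List.mem_map_of_mem (mem_levelPaths.2 ⟨hq, hqm⟩), ?_⟩
    rw [vEBBlock_of_subtreeAt? hs]
    refine List.mem_map.2 ⟨p.drop m, ih ?_ ?_, List.take_append_drop m p⟩
    · have := height_add_length_le_of_subtreeAt? hs
      omega
    · rwa [← isVertex_append_iff hs, List.take_append_drop]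

lemma prefix_of_mem_vEBBlock {ε : ℝ} {fuel : ℕ} {t : OTree} {q p : List ℕ}
    (h : p ∈ vEBBlock ε fuel t q) : q <+: p := by
  obtain ⟨-, -, r, -, rfl⟩ := mem_vEBBlock_iff.1 h
  exact List.prefix_append q r

lemma pairwise_vEBAux (ε : ℝ) (fuel : ℕ) (t : OTree) :
    (vEBAux ε fuel t).Pairwise fun p p' => ¬ p' <+: p := by
  induction fuel generalizing t with
  | zero => simp [vEBAux]
  | succ fuel ih =>
    rw [vEBAux_succ]
    split_ifs
    · simp
    set m := cutLevel ε (height t)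
    have hm1 : 1 ≤ m := le_max_right _ _
    have hbottom : ∀ p ∈ ((levelPaths m t).map (vEBBlock ε fuel t)).flatten,
        ∃ q ∈ levelPaths m t, q <+: p := by
      simp only [List.mem_flatten, List.mem_map]
      rintro p ⟨_, ⟨q, hq, rfl⟩, hp⟩
      exact ⟨q, hq, prefix_of_mem_vEBBlock hp⟩
    refine List.pairwise_append.2 ⟨ih _, List.pairwise_flatten.2 ⟨?_, ?_⟩, ?_⟩
    · simp only [List.mem_map]
      rintro _ ⟨q, -, rfl⟩
      cases hs : subtreeAt? t q with
      | none => simp [vEBBlock, hs]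
      | some s =>
        rw [vEBBlock_of_subtreeAt? hs, List.pairwise_map]
        simpa using ih s
    · rw [List.pairwise_map]
      refine (nodup_levelPaths m t).imp_of_mem fun {q q'} hq hq' hne p hp p' hp' hpre => hne ?_
      rw [mem_levelPaths] at hq hq'
      rw [List.prefix_iff_eq_take.1 (prefix_of_mem_vEBBlock hp), hq.2,
        List.prefix_iff_eq_take.1 ((prefix_of_mem_vEBBlock hp').trans hpre), hq'.2]
    · intro p hp p' hp' hpre
      have htop := (isVertex_trunc_iff.1 (isVertex_of_mem_vEBAux hp)).2
      obtain ⟨q, hq, hqp⟩ := hbottom p' hp'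
      have := (mem_levelPaths.1 hq).2
      have := hqp.length_le
      have := hpre.length_le
      omega

lemma mem_vEB_iff {ε : ℝ} (hε : ε < 1) {t : OTree} {p : List ℕ} :
    p ∈ vEB ε t ↔ IsVertex t p :=
  ⟨isVertex_of_mem_vEBAux, mem_vEBAux_of_isVertex hε le_rfl⟩

/-- For every memory interval `A` and every branch `B` (given by its
leaf `ℓ`), the intersection `A ∩ B` induces a (possibly empty) subpath of the branch. -/
theorem memInterval_inter_branch_subpath
    (ε : ℝ) (hε0 : 0 < ε) (hε1 : ε ≤ 1/2) (t : OTree) (ht : Uniform t)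
    (A : Set (List ℕ)) (hA : MemInterval ε t A)
    (ℓ : List ℕ) (hℓ : IsLeaf t ℓ)
    (n₁ n₂ n₃ : ℕ) (h12 : n₁ ≤ n₂) (h23 : n₂ ≤ n₃)
    (h1 : ℓ.take n₁ ∈ A) (h3 : ℓ.take n₃ ∈ A) :
    ℓ.take n₂ ∈ A := by
  obtain ⟨i, n, rfl⟩ := hA
  have hL : (vEB ε t).Pairwise fun p p' => ¬ p' <+: p := pairwise_vEBAux ε (height t) t
  have hnd : (vEB ε t).Nodup := hL.imp fun h ↦ by rintro rfl; exact h (List.prefix_refl _)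
  simp only [Set.mem_ofPred_eq, hnd.mem_take_drop_iff] at h1 h3 ⊢
  have hε : ε < 1 := by linarith
  have h2 : ℓ.take n₂ ∈ vEB ε t := (mem_vEB_iff hε).2
    (((mem_vEB_iff hε).1 h3.1).of_prefix (List.take_prefix_take_left h23))
  have := List.idxOf_le_idxOf_of_pairwise hL (List.take_prefix_take_left h12) h1.1
  have := List.idxOf_le_idxOf_of_pairwise hL (List.take_prefix_take_left h23) h2
  exact ⟨h2, by omega, by omega⟩

end VEB
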